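/- Let m be a positive integer and suppose φ = I^m_{-,2} f, where f is locally integrable on (0,∞) and ∫₁^∞ |f(s)| s^{2m-1} ds < ∞. Then f(t) = ((-D)^m φ)(t) for almost all t > 0, where D = (1/(2t)) d/dt. -/

import Mathlib

open MeasureTheory Real Set

/-- Right-sided modified Erdélyi–Kober fractional integral of order `α`. -/
noncomputable def EKminus (α : ℝ) (f : ℝ → ℝ) (t : ℝ) : ℝ :=
  2 * (Real.Gamma α)⁻¹ * ∫ s in Ioi t, f s * s * (s ^ 2 - t ^ 2) ^ (α - 1)

/-- The operator `-D` where `D = (1/(2t)) d/dt`. -/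
noncomputable def negD (g : ℝ → ℝ) : ℝ → ℝ := fun t => -(deriv g t) / (2 * t)

/-!
For integer order, `I^m_{-,2}` is the `m`-fold iterate of `I¹ g (t) = 2 ∫_t^∞ g(u) u du`: Fubini on
the triangle `t < u < s`, together with `∫_t^s 2u (s² - u²)^k du = (s² - t²)^(k+1) / (k+1)`, gives
`I¹ (I^(k+1) f) = I^(k+2) f`. Wherever `g` is continuous, `I¹ g` has derivative `-2t g(t)`, so
`-D` inverts `I¹` there. Every `I^(k+1) f` is continuous on `(0, ∞)`, being a tail integral, so
`(-D) I^(k+2) f = I^(k+1) f` holds everywhere on `(0, ∞)`; only the last step `(-D) I¹ f = f` is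
restricted to the Lebesgue points of `f`.
-/

open Filter Topology

section TailIntegral

variable {h : ℝ → ℝ} {c t : ℝ}

theorem MeasureTheory.IntegrableOn.integral_Ioi_eventuallyEq_sub (hh : IntegrableOn h (Ioi c))
    (ht : c < t) :
    (fun x => ∫ u in Ioi x, h u) =ᶠ[𝓝 t] fun x => (∫ u in Ioi c, h u) - ∫ u in c..x, h u := by
  filter_upwards [Ioi_mem_nhds ht] with x hx
  rw [intervalIntegral.integral_of_le (le_of_lt hx), eq_sub_iff_add_eq',
    ← setIntegral_union Ioc_disjoint_Ioi_same measurableSet_Ioi (hh.mono_set Ioc_subset_Ioi_self)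
      (hh.mono_set (Ioi_subset_Ioi (le_of_lt hx))), Ioc_union_Ioi_eq_Ioi (le_of_lt hx)]

theorem MeasureTheory.IntegrableOn.continuousAt_integral_Ioi (hh : IntegrableOn h (Ioi c))
    (ht : c < t) : ContinuousAt (fun x => ∫ u in Ioi x, h u) t := by
  refine ContinuousAt.congr ?_ (hh.integral_Ioi_eventuallyEq_sub ht).symm
  have hint : IntervalIntegrable h volume c (t + 1) :=
    (intervalIntegrable_iff_integrableOn_Ioc_of_le (by linarith)).2
      (hh.mono_set Ioc_subset_Ioi_self)
  refine continuousAt_const.sub ((intervalIntegral.continuousOn_primitive_interval' hint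
    left_mem_uIcc).continuousAt ?_)
  rw [uIcc_of_le (by linarith)]
  exact Icc_mem_nhds ht (by linarith)

theorem MeasureTheory.IntegrableOn.hasDerivAt_integral_Ioi (hh : IntegrableOn h (Ioi c))
    (ht : c < t) (hcont : ContinuousAt h t) :
    HasDerivAt (fun x => ∫ u in Ioi x, h u) (-h t) t := by
  refine HasDerivAt.congr_of_eventuallyEq ?_ (hh.integral_Ioi_eventuallyEq_sub ht)
  refine (intervalIntegral.integral_hasDerivAt_right ?_
    (AEStronglyMeasurable.stronglyMeasurableAtFilter_of_mem hh.aestronglyMeasurable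
      (Ioi_mem_nhds ht)) hcont).const_sub _
  exact (intervalIntegrable_iff_integrableOn_Ioc_of_le ht.le).2 (hh.mono_set Ioc_subset_Ioi_self)

theorem MeasureTheory.IntegrableOn.ae_hasDerivAt_integral_Ioi (hh : IntegrableOn h (Ioi c)) :
    ∀ᵐ t ∂volume.restrict (Ioi c), HasDerivAt (fun x => ∫ u in Ioi x, h u) (-h t) t := by
  have hg : Integrable ((Ioi c).indicator h) := (integrable_indicator_iff measurableSet_Ioi).2 hh
  filter_upwards [ae_restrict_of_ae (LocallyIntegrable.ae_hasDerivAt_integral hg.locallyIntegrable),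
    ae_restrict_mem measurableSet_Ioi] with t hderiv (ht : c < t)
  rw [← indicator_of_mem (show t ∈ Ioi c from ht) h]
  refine ((hderiv c).const_sub (∫ u in Ioi c, h u)).congr_of_eventuallyEq ?_
  filter_upwards [hh.integral_Ioi_eventuallyEq_sub ht, Ioi_mem_nhds ht] with x hx hcx
  rw [hx, intervalIntegral.integral_congr_ae (ae_of_all _ fun u hu => ?_)]
  rw [uIoc_of_le (le_of_lt hcx)] at hu
  exact (indicator_of_mem hu.1 h).symm

end TailIntegral

theorem ae_restrict_Ioi_of_forall_lt {μ : Measure ℝ} {p : ℝ → Prop} {a : ℝ}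
    (h : ∀ c, a < c → ∀ᵐ t ∂μ.restrict (Ioi c), p t) : ∀ᵐ t ∂μ.restrict (Ioi a), p t := by
  have hU : Ioi a = ⋃ n : ℕ, Ioi (a + 1 / (n + 1)) := by
    ext x
    simp only [mem_Ioi, mem_iUnion]
    refine ⟨fun hx => (exists_nat_one_div_lt (sub_pos.2 hx)).imp fun n hn => by linarith,
      fun ⟨n, hn⟩ => lt_trans (lt_add_of_pos_right a (by positivity)) hn⟩
  rw [hU, ae_restrict_iUnion_iff]
  exact fun n => h _ (lt_add_of_pos_right a (by positivity))

variable {f : ℝ → ℝ} {q : ℝ}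

theorem integrableOn_Ioi_mul_pow (hloc : LocallyIntegrableOn f (Ioi 0))
    (hint : IntegrableOn (fun s => |f s| * s ^ q) (Ioi 1)) {n : ℕ} (hn : (n : ℝ) ≤ q) {c : ℝ}
    (hc : 0 < c) : IntegrableOn (fun s => f s * s ^ n) (Ioi c) := by
  have hnear : IntegrableOn (fun s => f s * s ^ n) (Icc c 1) :=
    (hloc.integrableOn_compact_subset (fun s hs => hc.trans_le hs.1) isCompact_Icc).mul_continuousOn
      (continuous_pow n).continuousOn isCompact_Icc
  have hfar : IntegrableOn (fun s => f s * s ^ n) (Ioi 1) := by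
    refine hint.mono' ((hloc.aestronglyMeasurable.mono_set (Ioi_subset_Ioi zero_le_one)).mul
      (continuous_pow n).aestronglyMeasurable) ?_
    filter_upwards [ae_restrict_mem measurableSet_Ioi] with s (hs : 1 < s)
    rw [norm_mul, norm_pow, Real.norm_eq_abs, Real.norm_of_nonneg (by linarith), ← rpow_natCast]
    exact mul_le_mul_of_nonneg_left (rpow_le_rpow_of_exponent_le hs.le hn) (abs_nonneg _)
  exact (hnear.union hfar).mono_set fun s hs => (le_or_gt s 1).imp (fun h => ⟨le_of_lt hs, h⟩) id

theorem integrableOn_Ioi_kernel (hloc : LocallyIntegrableOn f (Ioi 0))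
    (hint : IntegrableOn (fun s => |f s| * s ^ q) (Ioi 1)) {k : ℕ} (hk : 2 * (k : ℝ) + 1 ≤ q)
    (t : ℝ) {c : ℝ} (hc : 0 < c) :
    IntegrableOn (fun s => f s * s * (s ^ 2 - t ^ 2) ^ k) (Ioi c) := by
  have hexpand : (fun s => f s * s * (s ^ 2 - t ^ 2) ^ k) = fun s =>
      ∑ j ∈ Finset.range (k + 1), f s * s ^ (2 * j + 1) * ((-t ^ 2) ^ (k - j) * k.choose j) := by
    ext s
    rw [sub_eq_add_neg, add_pow, Finset.mul_sum]
    exact Finset.sum_congr rfl fun j _ => by ring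
  rw [hexpand]
  refine integrable_finsetSum _ fun j hj => (integrableOn_Ioi_mul_pow hloc hint ?_ hc).mul_const _
  have : (j : ℝ) ≤ k := by exact_mod_cast Finset.mem_range_succ_iff.1 hj
  push_cast
  linarith

theorem integral_Ioi_indicator_Iio_mul_pow (a : ℝ) (k : ℕ) {t s : ℝ} (hts : t ≤ s) :
    ∫ u in Ioi t, (Iio s).indicator (fun u => a * (s ^ 2 - u ^ 2) ^ k * u) u
      = a * (s ^ 2 - t ^ 2) ^ (k + 1) / (2 * (k + 1)) := by
  have hderiv : ∀ u ∈ uIcc t s,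
      HasDerivAt (fun u => -(a * (s ^ 2 - u ^ 2) ^ (k + 1)) / (2 * (k + 1)))
        (a * (s ^ 2 - u ^ 2) ^ k * u) u := by
    intro u _
    refine (((((hasDerivAt_pow 2 u).const_sub (s ^ 2)).pow (k + 1)).const_mul a).neg.div_const
      (2 * ((k : ℝ) + 1))).congr_deriv ?_
    push_cast
    field_simp
  rw [setIntegral_indicator measurableSet_Iio, Ioi_inter_Iio, ← integral_Ioc_eq_integral_Ioo,
    ← intervalIntegral.integral_of_le hts, intervalIntegral.integral_eq_sub_of_hasDerivAt hderiv
      (Continuous.intervalIntegrable (by fun_prop) _ _), sub_self, zero_pow k.succ_ne_zero]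
  ring

noncomputable def triangleIntegrand (f : ℝ → ℝ) (k : ℕ) : ℝ × ℝ → ℝ :=
  {p | p.1 < p.2}.indicator fun p => f p.2 * p.2 * (p.2 ^ 2 - p.1 ^ 2) ^ k * p.1

section TriangleIntegrand

variable {k : ℕ} {t : ℝ}

theorem triangleIntegrand_eq_indicator_Ioi (u s : ℝ) :
    triangleIntegrand f k (u, s)
      = (Ioi u).indicator (fun s => f s * s * (s ^ 2 - u ^ 2) ^ k * u) s := by
  simp only [triangleIntegrand, indicator_apply, mem_ofPred_eq, mem_Ioi]

theorem triangleIntegrand_eq_indicator_Iio (u s : ℝ) :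
    triangleIntegrand f k (u, s)
      = (Iio s).indicator (fun u => f s * s * (s ^ 2 - u ^ 2) ^ k * u) u := by
  simp only [triangleIntegrand, indicator_apply, mem_ofPred_eq, mem_Iio]

theorem integral_Ioi_norm_triangleIntegrand (ht : 0 ≤ t) {s : ℝ} (hs : t < s) :
    ∫ u in Ioi t, ‖triangleIntegrand f k (u, s)‖
      = ‖f s * s * (s ^ 2 - t ^ 2) ^ (k + 1)‖ / (2 * (k + 1)) := by
  have hnorm : ∀ u ∈ Ioi t, ‖triangleIntegrand f k (u, s)‖
      = (Iio s).indicator (fun u => |f s| * s * (s ^ 2 - u ^ 2) ^ k * u) u := by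
    intro u (hu : t < u)
    rw [triangleIntegrand_eq_indicator_Iio]
    by_cases hus : u < s
    · simp only [indicator_of_mem (show u ∈ Iio s from hus), norm_mul, norm_pow, Real.norm_eq_abs]
      rw [abs_of_pos (show 0 < s by linarith), abs_of_pos (show 0 < u by linarith),
        abs_of_pos (show 0 < s ^ 2 - u ^ 2 by nlinarith)]
    · simp [indicator_of_notMem (show u ∉ Iio s from hus)]
  rw [setIntegral_congr_fun measurableSet_Ioi hnorm, integral_Ioi_indicator_Iio_mul_pow _ _ hs.le,
    norm_mul, norm_mul, norm_pow, Real.norm_eq_abs, Real.norm_eq_abs, Real.norm_eq_abs,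
    abs_of_pos (show 0 < s by linarith), abs_of_nonneg (show 0 ≤ s ^ 2 - t ^ 2 by nlinarith)]

theorem integrable_triangleIntegrand (ht : 0 ≤ t)
    (hf : AEStronglyMeasurable f (volume.restrict (Ioi t)))
    (hint : IntegrableOn (fun s => f s * s * (s ^ 2 - t ^ 2) ^ (k + 1)) (Ioi t)) :
    Integrable (triangleIntegrand f k)
      ((volume.restrict (Ioi t)).prod (volume.restrict (Ioi t))) := by
  have hmeas : AEStronglyMeasurable (triangleIntegrand f k)
      ((volume.restrict (Ioi t)).prod (volume.restrict (Ioi t))) :=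
    (((hf.comp_snd.mul continuous_snd.aestronglyMeasurable).mul
      (by fun_prop : Continuous fun p : ℝ × ℝ => (p.2 ^ 2 - p.1 ^ 2) ^ k).aestronglyMeasurable).mul
        continuous_fst.aestronglyMeasurable).indicator
      (measurableSet_lt measurable_fst measurable_snd)
  refine (integrable_prod_iff' hmeas).2 ⟨ae_of_all _ fun s => ?_, ?_⟩
  · simp_rw [triangleIntegrand_eq_indicator_Iio]
    refine (integrable_indicator_iff measurableSet_Iio).2 ?_
    rw [IntegrableOn, Measure.restrict_restrict measurableSet_Iio]
    exact (Continuous.integrableOn_Icc (by fun_prop)).mono_set fun u hu => ⟨hu.2.le, hu.1.le⟩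
  · refine (hint.norm.div_const (2 * ((k : ℝ) + 1))).congr ?_
    filter_upwards [ae_restrict_mem measurableSet_Ioi] with s hs
    exact (integral_Ioi_norm_triangleIntegrand ht hs).symm

theorem integral_Ioi_integral_Ioi_kernel_mul (ht : 0 ≤ t)
    (hf : AEStronglyMeasurable f (volume.restrict (Ioi t)))
    (hint : IntegrableOn (fun s => f s * s * (s ^ 2 - t ^ 2) ^ (k + 1)) (Ioi t)) :
    IntegrableOn (fun u => (∫ s in Ioi u, f s * s * (s ^ 2 - u ^ 2) ^ k) * u) (Ioi t) ∧
      ∫ u in Ioi t, (∫ s in Ioi u, f s * s * (s ^ 2 - u ^ 2) ^ k) * u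
        = (∫ s in Ioi t, f s * s * (s ^ 2 - t ^ 2) ^ (k + 1)) / (2 * (k + 1)) := by
  have hF := integrable_triangleIntegrand ht hf hint
  have hinner_s : ∀ u ∈ Ioi t, ∫ s in Ioi t, triangleIntegrand f k (u, s)
      = (∫ s in Ioi u, f s * s * (s ^ 2 - u ^ 2) ^ k) * u := by
    intro u (hu : t < u)
    simp only [triangleIntegrand_eq_indicator_Ioi]
    rw [setIntegral_indicator measurableSet_Ioi, Ioi_inter_Ioi, max_eq_right hu.le,
      integral_mul_const]
  have hinner_u : ∀ s ∈ Ioi t, ∫ u in Ioi t, triangleIntegrand f k (u, s)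
      = f s * s * (s ^ 2 - t ^ 2) ^ (k + 1) / (2 * (k + 1)) := by
    intro s (hs : t < s)
    simp only [triangleIntegrand_eq_indicator_Iio]
    exact integral_Ioi_indicator_Iio_mul_pow _ _ hs.le
  refine ⟨hF.integral_prod_left.congr ?_, ?_⟩
  · filter_upwards [ae_restrict_mem measurableSet_Ioi] with u hu using hinner_s u hu
  calc ∫ u in Ioi t, (∫ s in Ioi u, f s * s * (s ^ 2 - u ^ 2) ^ k) * u
      = ∫ u in Ioi t, ∫ s in Ioi t, triangleIntegrand f k (u, s) :=
        (setIntegral_congr_fun measurableSet_Ioi hinner_s).symm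
    _ = ∫ s in Ioi t, ∫ u in Ioi t, triangleIntegrand f k (u, s) := integral_integral_swap hF
    _ = ∫ s in Ioi t, f s * s * (s ^ 2 - t ^ 2) ^ (k + 1) / (2 * (k + 1)) :=
      setIntegral_congr_fun measurableSet_Ioi hinner_u
    _ = _ := integral_div _ _

end TriangleIntegrand

theorem Filter.EventuallyEq.negD_eq {g g' : ℝ → ℝ} {t : ℝ} (h : g =ᶠ[𝓝 t] g') :
    negD g t = negD g' t := by
  simp only [negD, h.deriv_eq]

theorem EKminus_one (g : ℝ → ℝ) : EKminus 1 g = fun t => 2 * ∫ u in Ioi t, g u * u := by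
  ext t
  simp [EKminus]

theorem EKminus_natCast_add_one (k : ℕ) (t : ℝ) :
    EKminus ((k : ℝ) + 1) f t = 2 / k.factorial * ∫ s in Ioi t, f s * s * (s ^ 2 - t ^ 2) ^ k := by
  simp only [EKminus, Gamma_nat_eq_factorial, add_sub_cancel_right, rpow_natCast, div_eq_mul_inv]

variable {g : ℝ → ℝ} {c t : ℝ}

theorem continuousAt_EKminus_one (hg : IntegrableOn (fun u => g u * u) (Ioi c)) (hct : c < t) :
    ContinuousAt (EKminus 1 g) t := by
  rw [EKminus_one]
  exact (hg.continuousAt_integral_Ioi hct).const_mul 2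

theorem negD_EKminus_one_of_hasDerivAt
    (h : HasDerivAt (fun x => ∫ u in Ioi x, g u * u) (-(g t * t)) t) (ht : t ≠ 0) :
    negD (EKminus 1 g) t = g t := by
  rw [negD, EKminus_one, (h.const_mul 2).deriv]
  field_simp

theorem negD_EKminus_one (hg : IntegrableOn (fun u => g u * u) (Ioi c)) (hct : c < t)
    (ht : t ≠ 0) (hcont : ContinuousAt g t) : negD (EKminus 1 g) t = g t :=
  negD_EKminus_one_of_hasDerivAt (hg.hasDerivAt_integral_Ioi hct (hcont.mul continuousAt_id)) ht

theorem ae_negD_EKminus_one (hg : IntegrableOn (fun u => g u * u) (Ioi c)) (hc : 0 ≤ c) :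
    ∀ᵐ t ∂volume.restrict (Ioi c), negD (EKminus 1 g) t = g t := by
  filter_upwards [hg.ae_hasDerivAt_integral_Ioi, ae_restrict_mem measurableSet_Ioi]
    with t ht (hct : c < t)
  exact negD_EKminus_one_of_hasDerivAt ht (by linarith)

theorem EKminus_one_EKminus_natCast_add_one {k : ℕ} (ht : 0 ≤ t)
    (hf : AEStronglyMeasurable f (volume.restrict (Ioi t)))
    (hint : IntegrableOn (fun s => f s * s * (s ^ 2 - t ^ 2) ^ (k + 1)) (Ioi t)) :
    IntegrableOn (fun u => EKminus ((k : ℝ) + 1) f u * u) (Ioi t) ∧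
      EKminus 1 (EKminus ((k : ℝ) + 1) f) t = EKminus (((k + 1 : ℕ) : ℝ) + 1) f t := by
  obtain ⟨hI, hE⟩ := integral_Ioi_integral_Ioi_kernel_mul ht hf hint
  have hEK (u : ℝ) : EKminus ((k : ℝ) + 1) f u * u
      = 2 / k.factorial * ((∫ s in Ioi u, f s * s * (s ^ 2 - u ^ 2) ^ k) * u) := by
    rw [EKminus_natCast_add_one, mul_assoc]
  refine ⟨by simp only [hEK]; exact hI.const_mul _, ?_⟩
  rw [EKminus_one]
  simp only [hEK]
  rw [integral_const_mul, hE, EKminus_natCast_add_one, Nat.factorial_succ]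
  push_cast
  field_simp

theorem continuousAt_EKminus_natCast_add_one {k : ℕ}
    (hf : AEStronglyMeasurable f (volume.restrict (Ioi 0)))
    (hker : ∀ x > 0, IntegrableOn (fun s => f s * s * (s ^ 2 - x ^ 2) ^ k) (Ioi x)) (ht : 0 < t) :
    ContinuousAt (EKminus ((k : ℝ) + 1) f) t := by
  cases k with
  | zero =>
    rw [Nat.cast_zero, zero_add]
    exact continuousAt_EKminus_one (by simpa using hker (t / 2) (half_pos ht)) (half_lt_self ht)
  | succ j =>
    have hsemi (x : ℝ) (hx : 0 < x) := EKminus_one_EKminus_natCast_add_one hx.le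
      (hf.mono_set (Ioi_subset_Ioi hx.le)) (hker x hx)
    refine (continuousAt_EKminus_one (hsemi _ (half_pos ht)).1 (half_lt_self ht)).congr ?_
    filter_upwards [Ioi_mem_nhds ht] with x hx using (hsemi x hx).2

theorem negD_EKminus_natCast_add_two {k : ℕ}
    (hf : AEStronglyMeasurable f (volume.restrict (Ioi 0)))
    (hker : ∀ j ≤ k + 1, ∀ x > 0, IntegrableOn (fun s => f s * s * (s ^ 2 - x ^ 2) ^ j) (Ioi x)) :
    EqOn (negD (EKminus (((k + 1 : ℕ) : ℝ) + 1) f)) (EKminus ((k : ℝ) + 1) f) (Ioi 0) := by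
  intro t (ht : 0 < t)
  have hsemi (x : ℝ) (hx : 0 < x) := EKminus_one_EKminus_natCast_add_one hx.le
    (hf.mono_set (Ioi_subset_Ioi hx.le)) (hker (k + 1) le_rfl x hx)
  have hnear : EKminus (((k + 1 : ℕ) : ℝ) + 1) f =ᶠ[𝓝 t] EKminus 1 (EKminus ((k : ℝ) + 1) f) := by
    filter_upwards [Ioi_mem_nhds ht] with x hx using (hsemi x hx).2.symm
  rw [hnear.negD_eq]
  exact negD_EKminus_one (hsemi _ (half_pos ht)).1 (half_lt_self ht) ht.ne'
    (continuousAt_EKminus_natCast_add_one hf (hker k k.le_succ) ht)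

theorem negD_iterate_EKminus {n : ℕ} (hf : AEStronglyMeasurable f (volume.restrict (Ioi 0)))
    (hker : ∀ j ≤ n, ∀ x > 0, IntegrableOn (fun s => f s * s * (s ^ 2 - x ^ 2) ^ j) (Ioi x)) :
    ∀ i j : ℕ, i + j = n →
      EqOn (negD^[i] (EKminus ((n : ℝ) + 1) f)) (EKminus ((j : ℝ) + 1) f) (Ioi 0)
  | 0, j, hij => by
    rw [zero_add] at hij
    subst hij
    exact fun _ _ => rfl
  | i + 1, j, hij => fun t ht => by
    have hprev := negD_iterate_EKminus hf hker i (j + 1) (by omega)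
    rw [Function.iterate_succ_apply', (hprev.eventuallyEq_of_mem (Ioi_mem_nhds ht)).negD_eq]
    exact negD_EKminus_natCast_add_two hf (fun j' hj' => hker j' (by omega)) ht

/-- If `φ = I^m_{-,2} f` with `m` a positive integer, `f` locally integrable on `(0,∞)` and
`∫₁^∞ |f(s)| s^{2m-1} ds < ∞`, then `f(t) = ((-D)^m φ)(t)` for almost all `t > 0`. -/
theorem ek_integer_order_inversion (m : ℕ) (hm : 0 < m) (f : ℝ → ℝ)
    (hloc : LocallyIntegrableOn f (Ioi (0 : ℝ)))
    (hint : IntegrableOn (fun s => |f s| * s ^ (2 * (m : ℝ) - 1)) (Ioi (1 : ℝ))) :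
    ∀ᵐ t ∂(volume.restrict (Ioi (0 : ℝ))),
      (negD^[m] (EKminus (m : ℝ) f)) t = f t := by
  obtain ⟨n, rfl⟩ := Nat.exists_eq_add_one_of_ne_zero hm.ne'
  have hker (j : ℕ) (hj : j ≤ n) (x : ℝ) (hx : 0 < x) :
      IntegrableOn (fun s => f s * s * (s ^ 2 - x ^ 2) ^ j) (Ioi x) := by
    refine integrableOn_Ioi_kernel hloc hint ?_ x hx
    have : (j : ℝ) ≤ n := by exact_mod_cast hj
    push_cast
    linarith
  have hiter := negD_iterate_EKminus hloc.aestronglyMeasurable hker n 0 (add_zero n)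
  have hlast : ∀ᵐ t ∂volume.restrict (Ioi 0), negD (EKminus 1 f) t = f t :=
    ae_restrict_Ioi_of_forall_lt fun c hc =>
      ae_negD_EKminus_one (by simpa using hker 0 n.zero_le c hc) hc.le
  filter_upwards [hlast, ae_restrict_mem measurableSet_Ioi] with t ht ht0
  rw [Nat.cast_add_one, Function.iterate_succ_apply',
    (hiter.eventuallyEq_of_mem (Ioi_mem_nhds ht0)).negD_eq]
  simpa using ht
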